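/- Let G be a critical graph and let xy be an edge of G. Then the degree of x is at least 2, and d_G(x) + d_G(y) ≥ Δ(G) + 2. -/

import Mathlib

open SimpleGraph

variable {V : Type*}

/-- `c` is a proper edge coloring of `G` using colors `0, …, n-1`:
every edge gets a color `< n`, and distinct edges sharing an endpoint
receive distinct colors. -/
def IsProperEdgeColoring (G : SimpleGraph V) (n : ℕ) (c : Sym2 V → ℕ) : Prop :=
  (∀ e ∈ G.edgeSet, c e < n) ∧
    ∀ e₁ ∈ G.edgeSet, ∀ e₂ ∈ G.edgeSet, e₁ ≠ e₂ → (∃ v, v ∈ e₁ ∧ v ∈ e₂) →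
      c e₁ ≠ c e₂

/-- The edge chromatic number `χ'(G)`: the least number of colors in a proper
edge coloring of `G`. -/
noncomputable def edgeChromaticNumber (G : SimpleGraph V) : ℕ :=
  sInf {n | ∃ c, IsProperEdgeColoring G n c}

/-- The degree `d_G(v)` of a vertex. -/
noncomputable def deg (G : SimpleGraph V) (v : V) : ℕ := (G.neighborSet v).ncard

/-- The maximum vertex degree `Δ(G)`. -/
noncomputable def maxDeg (G : SimpleGraph V) : ℕ := sSup {d | ∃ v, deg G v = d}

/-- `G` is critical: it is class 2 (i.e. `χ'(G) ≠ Δ(G)`) and every proper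
subgraph `H` of `G` satisfies `χ'(H) < χ'(G)`. -/
def IsCritical (G : SimpleGraph V) : Prop :=
  edgeChromaticNumber G ≠ maxDeg G ∧
    ∀ H : G.Subgraph, H ≠ ⊤ → edgeChromaticNumber H.coe < edgeChromaticNumber G

/-- `G` is `k`-critical: critical with maximum degree `k`. -/
def IsKCritical (G : SimpleGraph V) (k : ℕ) : Prop :=
  IsCritical G ∧ maxDeg G = k

/-!
A vertex of degree `Δ(G)` needs `Δ(G)` colors, and `G` is class 2, so `χ'(G) = k + 1` with
`k ≥ Δ(G)`. By criticality `G - xy` has a proper `k`-edge-coloring. If some color were missing at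
both `x` and `y`, giving it to `xy` would `k`-color `G`; hence the `k` colors all occur on the
`(d(x) - 1) + (d(y) - 1)` edges at `x` or `y` other than `xy`, and `d(x) + d(y) ≥ k + 2 ≥ Δ(G) + 2`.
Finally `d(y) ≤ Δ(G)` gives `d(x) ≥ 2`.
-/

theorem deg_le_maxDeg [Finite V] (G : SimpleGraph V) (v : V) : deg G v ≤ maxDeg G := by
  refine le_csSup ⟨Nat.card V, ?_⟩ ⟨v, rfl⟩
  rintro _ ⟨u, rfl⟩
  exact Set.ncard_le_card _

namespace IsProperEdgeColoring

variable {W : Type*} {G : SimpleGraph V} {n : ℕ} {c : Sym2 V → ℕ}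

theorem mono {m : ℕ} (hc : IsProperEdgeColoring G n c) (hnm : n ≤ m) :
    IsProperEdgeColoring G m c :=
  ⟨fun e he => (hc.1 e he).trans_le hnm, hc.2⟩

theorem comap {G' : SimpleGraph W} {c : Sym2 W → ℕ} (f : G ↪g G')
    (hc : IsProperEdgeColoring G' n c) : IsProperEdgeColoring G n (c ∘ Sym2.map f) :=
  ⟨fun _ he => hc.1 _ (f.toHom.map_mem_edgeSet he),
    fun _ he₁ _ he₂ hne ⟨v, hv₁, hv₂⟩ => hc.2 _ (f.toHom.map_mem_edgeSet he₁) _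
      (f.toHom.map_mem_edgeSet he₂) (fun h => hne (Sym2.map.injective f.injective h))
      ⟨f v, Sym2.mem_map.mpr ⟨v, hv₁, rfl⟩, Sym2.mem_map.mpr ⟨v, hv₂, rfl⟩⟩⟩

theorem deg_le (hc : IsProperEdgeColoring G n c) (v : V) : deg G v ≤ n := by
  have hinj : Set.InjOn (fun u => c s(v, u)) (G.neighborSet v) := by
    intro u₁ hu₁ u₂ hu₂ hcu
    by_contra hne
    refine hc.2 _ hu₁ _ hu₂ (fun h => hne ?_) ⟨v, Sym2.mem_mk_left _ _, Sym2.mem_mk_left _ _⟩ hcu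
    exact Sym2.congr_right.mp h
  calc deg G v ≤ (Set.Iio n).ncard :=
        Set.ncard_le_ncard_of_injOn _ (fun u hu => hc.1 _ hu) hinj (Set.finite_Iio n)
    _ = n := by rw [← Finset.coe_range, Set.ncard_coe_finset, Finset.card_range]

theorem maxDeg_le (hc : IsProperEdgeColoring G n c) : maxDeg G ≤ n :=
  csSup_le' <| by rintro _ ⟨v, rfl⟩; exact hc.deg_le v

theorem edgeChromaticNumber_le (hc : IsProperEdgeColoring G n c) : edgeChromaticNumber G ≤ n :=
  Nat.sInf_le ⟨c, hc⟩

theorem update_of_deleteEdges [DecidableEq V] {x y : V} {a : ℕ}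
    (hc : IsProperEdgeColoring (G.deleteEdges {s(x, y)}) n c) (ha : a < n)
    (hx : ∀ u, G.Adj x u → u ≠ y → c s(x, u) ≠ a) (hy : ∀ u, G.Adj y u → u ≠ x → c s(y, u) ≠ a) :
    IsProperEdgeColoring G n (Function.update c s(x, y) a) := by
  have hdel : ∀ e ∈ G.edgeSet, e ≠ s(x, y) → e ∈ (G.deleteEdges {s(x, y)}).edgeSet :=
    fun e he hne => by rw [edgeSet_deleteEdges]; exact ⟨he, hne⟩
  have hfree : ∀ e ∈ G.edgeSet, e ≠ s(x, y) → ∀ v ∈ s(x, y), v ∈ e → c e ≠ a := by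
    intro e he hne v hv hve
    obtain ⟨u, rfl⟩ := Sym2.mem_iff_exists.mp hve
    rcases Sym2.mem_iff.mp hv with rfl | rfl
    · exact hx u he (by rintro rfl; exact hne rfl)
    · exact hy u he (by rintro rfl; exact hne Sym2.eq_swap)
  refine ⟨fun e he => ?_, fun e₁ he₁ e₂ he₂ hne ⟨v, hv₁, hv₂⟩ => ?_⟩
  · rcases eq_or_ne e s(x, y) with rfl | h
    · simpa using ha
    · rw [Function.update_of_ne h]; exact hc.1 _ (hdel e he h)
  · rcases eq_or_ne e₁ s(x, y) with rfl | h₁ <;> rcases eq_or_ne e₂ s(x, y) with rfl | h₂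
    · exact absurd rfl hne
    · rw [Function.update_self, Function.update_of_ne h₂]
      exact (hfree e₂ he₂ h₂ v hv₁ hv₂).symm
    · rw [Function.update_self, Function.update_of_ne h₁]
      exact hfree e₁ he₁ h₁ v hv₂ hv₁
    · rw [Function.update_of_ne h₁, Function.update_of_ne h₂]
      exact hc.2 _ (hdel e₁ he₁ h₁) _ (hdel e₂ he₂ h₂) hne ⟨v, hv₁, hv₂⟩

theorem add_two_le_deg_add_deg [Finite V] {x y : V} (hxy : G.Adj x y)
    (hc : IsProperEdgeColoring (G.deleteEdges {s(x, y)}) n c)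
    (hG : ∀ c', ¬ IsProperEdgeColoring G n c') : n + 2 ≤ deg G x + deg G y := by
  classical
  set Cx := (fun u => c s(x, u)) '' (G.neighborSet x \ {y})
  set Cy := (fun u => c s(y, u)) '' (G.neighborSet y \ {x})
  have hcover : Set.Iio n ⊆ Cx ∪ Cy := by
    intro a ha
    by_contra h
    simp only [Cx, Cy, Set.mem_union, Set.mem_image, Set.mem_sdiff, Set.mem_singleton_iff,
      not_or, not_exists, not_and] at h
    exact hG _ (hc.update_of_deleteEdges ha (fun u hu huy => h.1 u ⟨hu, huy⟩)
      (fun u hu hux => h.2 u ⟨hu, hux⟩))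
  have hCx : Cx.ncard + 1 ≤ deg G x :=
    (Nat.add_le_add_right Set.ncard_image_le 1).trans_eq (Set.ncard_sdiff_singleton_add_one hxy)
  have hCy : Cy.ncard + 1 ≤ deg G y :=
    (Nat.add_le_add_right Set.ncard_image_le 1).trans_eq
      (Set.ncard_sdiff_singleton_add_one hxy.symm)
  calc n + 2 = (Set.Iio n).ncard + 2 := by
        rw [← Finset.coe_range, Set.ncard_coe_finset, Finset.card_range]
    _ ≤ (Cx ∪ Cy).ncard + 2 := Nat.add_le_add_right (Set.ncard_le_ncard hcover) 2
    _ ≤ Cx.ncard + Cy.ncard + 2 := Nat.add_le_add_right (Set.ncard_union_le _ _) 2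
    _ ≤ deg G x + deg G y := by omega

end IsProperEdgeColoring

theorem exists_isProperEdgeColoring_edgeChromaticNumber [Finite V] (G : SimpleGraph V) :
    ∃ c, IsProperEdgeColoring G (edgeChromaticNumber G) c := by
  obtain ⟨N, ⟨f⟩⟩ := Finite.exists_equiv_fin (Sym2 V)
  exact Nat.sInf_mem (s := {n | ∃ c, IsProperEdgeColoring G n c})
    ⟨N, fun e => f e, fun e _ => (f e).isLt,
    fun _ _ _ _ hne _ h => hne (f.injective (Fin.val_injective h))⟩

theorem maxDeg_le_edgeChromaticNumber [Finite V] (G : SimpleGraph V) :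
    maxDeg G ≤ edgeChromaticNumber G :=
  (exists_isProperEdgeColoring_edgeChromaticNumber G).choose_spec.maxDeg_le

theorem IsCritical.exists_isProperEdgeColoring_deleteEdges [Finite V] {G : SimpleGraph V}
    (hG : IsCritical G) {e : Sym2 V} (he : e ∈ G.edgeSet) :
    ∃ c, IsProperEdgeColoring (G.deleteEdges {e}) (edgeChromaticNumber G - 1) c := by
  set H := (⊤ : G.Subgraph).deleteEdges {e}
  have hGH : G.deleteEdges {e} = H.spanningCoe := Subgraph.deleteEdges_spanningCoe_eq (G' := ⊤) _
  have hH : H ≠ ⊤ := fun h => by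
    have : e ∈ (G.deleteEdges {e}).edgeSet := by rw [hGH, h]; exact he
    simp [edgeSet_deleteEdges] at this
  obtain ⟨c, hc⟩ := exists_isProperEdgeColoring_edgeChromaticNumber H.coe
  have hspan : H.IsSpanning := fun _ => trivial
  rw [hGH]
  exact ⟨_, (hc.comap (H.spanningCoeEquivCoeOfSpanning hspan).toEmbedding).mono
    (Nat.le_sub_one_of_lt (hG.2 H hH))⟩

/-- If `G` is critical and `xy ∈ E(G)`, then `d_G(x) ≥ 2` and
`d_G(x) + d_G(y) ≥ Δ(G) + 2`. -/
theorem critical_degree_bounds [Fintype V] (G : SimpleGraph V)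
    (hG : IsCritical G) {x y : V} (hxy : G.Adj x y) :
    2 ≤ deg G x ∧ maxDeg G + 2 ≤ deg G x + deg G y := by
  have hΔ : maxDeg G < edgeChromaticNumber G :=
    (maxDeg_le_edgeChromaticNumber G).lt_of_ne hG.1.symm
  obtain ⟨c, hc⟩ := hG.exists_isProperEdgeColoring_deleteEdges (G.mem_edgeSet.mpr hxy)
  have hsum := hc.add_two_le_deg_add_deg hxy fun c' hc' =>
    absurd hc'.edgeChromaticNumber_le (by omega)
  have hy := deg_le_maxDeg G y
  omega
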